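/- arXiv:1903.08765 — 2 statements merged into one kernel-verified Lean document; each statement's English description precedes it below -/
import Mathlib

section
/- For any group B and integer p ≥ 2, if w ∈ (B ≀ C_p)' has the form w = (r_1, r_2, …, r_{p-1}, r_1^{-1}⋯r_{p-1}^{-1}[f,g]) in the base group, with r_1,…,r_{p-1}, f, g ∈ B, then w is a single commutator of two elements of B ≀ C_p. -/
/-!
Write `σ` for the generator of `C_p`. For `u, v` in the base group, `[u σ⁻¹, v]` lies in the base
group with `i`-th coordinate `u_i v_{i+1} u_i⁻¹ v_i⁻¹`. Take `u` supported at `0`. Away from `0`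
the coordinates are `v_{i+1} v_i⁻¹`, so `v_i = (r_1⁻¹ ⋯ r_{i-1}⁻¹)⁻¹ y` reproduces
`r_1, …, r_{p-1}`. Going once around the cycle gives `v_0 = P⁻¹ y` with `P = r_1⁻¹ ⋯ r_{p-1}⁻¹`,
so the `0`-th coordinate is `[u_0, y] P`, and `u_0 = P f P⁻¹`, `y = P g P⁻¹` turn it into
`P [f, g] = r_0`.
-/

/-- The cyclic shift action of `C_p = ZMod p` on the direct power `B^p`. -/
def cycShift (B : Type*) [Group B] (p : ℕ) :
    Multiplicative (ZMod p) →* MulAut (ZMod p → B) where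
  toFun k := MulEquiv.arrowCongr (Equiv.addRight (Multiplicative.toAdd k)) (MulEquiv.refl B)
  map_one' := by
    ext f i
    simp [MulEquiv.arrowCongr, Equiv.Perm.one_symm]
  map_mul' a b := by
    ext f i
    simp only [MulEquiv.arrowCongr, Equiv.coe_addRight, MulEquiv.coe_mk, Equiv.coe_fn_mk,
      MulEquiv.refl_apply, toAdd_mul, MulAut.mul_apply]
    congr 1
    simp only [Equiv.addRight_symm, Equiv.coe_addRight]
    abel

/-- The permutational wreath product `B ≀ C_p` with `C_p` acting on `p` points by cyclic shift. -/
abbrev Wr (B : Type*) [Group B] (p : ℕ) : Type _ :=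
  (ZMod p → B) ⋊[cycShift B p] Multiplicative (ZMod p)

open scoped commutatorElement

open SemidirectProduct

section

variable {B : Type*} [Group B] {p : ℕ}

theorem commutator_inl_mul_inr_inv_inl (u v : ZMod p → B) :
    ⁅(inl u : Wr B p) * inr (Multiplicative.ofAdd (1 : ZMod p))⁻¹, inl v⁆ =
      (inl fun i => u i * v (i + 1) * (u i)⁻¹ * (v i)⁻¹ : Wr B p) := by
  rw [commutatorElement_def]
  ext i
  · simp only [mul_left, inv_left, left_inl, right_inl, left_inr, right_inr, mul_right, inv_right]
    simp [cycShift, MulEquiv.arrowCongr, mul_assoc]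
  · simp

def invPrefixProd (r : ZMod p → B) (m : ℕ) : B :=
  ((List.range m).map fun i => (r ((i + 1 : ℕ) : ZMod p))⁻¹).prod

@[simp]
theorem invPrefixProd_zero (r : ZMod p → B) : invPrefixProd r 0 = 1 := rfl

theorem invPrefixProd_succ (r : ZMod p → B) (m : ℕ) :
    invPrefixProd r (m + 1) = invPrefixProd r m * (r ((m + 1 : ℕ) : ZMod p))⁻¹ := by
  simp [invPrefixProd, List.range_succ]

def prefixCochain (r : ZMod p → B) (y : B) (i : ZMod p) : B :=
  (invPrefixProd r (i - 1).val)⁻¹ * y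

theorem prefixCochain_one (r : ZMod p → B) (y : B) : prefixCochain r y 1 = y := by
  simp [prefixCochain]

variable [Fact (1 < p)]

theorem prefixCochain_zero (r : ZMod p → B) (y : B) :
    prefixCochain r y 0 = (invPrefixProd r (p - 1))⁻¹ * y := by
  simp [prefixCochain, ZMod.val_neg_of_ne_zero, ZMod.val_one]

theorem prefixCochain_add_one_mul_inv (r : ZMod p → B) (y : B) {i : ZMod p} (hi : i ≠ 0) :
    prefixCochain r y (i + 1) * (prefixCochain r y i)⁻¹ = r i := by
  have hval : i.val = (i - 1).val + 1 := by
    rw [ZMod.val_sub (by rw [ZMod.val_one]; exact ZMod.val_pos.mpr hi), ZMod.val_one]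
    have := ZMod.val_pos.mpr hi
    omega
  have hcast : (((i - 1).val + 1 : ℕ) : ZMod p) = i := by simp
  simp only [prefixCochain, add_sub_cancel_right, hval, invPrefixProd_succ, hcast]
  group

end

/-- if an element `w` of the base group of `B ≀ C_p` has the form
`(r_1, r_2, …, r_{p-1}, r_1⁻¹ ⋯ r_{p-1}⁻¹ [f,g])` (here the coordinate `i : ZMod p`
for `1 ≤ i ≤ p-1` carries `r_i`, and the last coordinate, which is `p ≡ 0 : ZMod p`,
carries `r_1⁻¹ ⋯ r_{p-1}⁻¹ ⁅f,g⁆`), then `w` is a single commutator of two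
elements of `B ≀ C_p`. -/
theorem base_form_is_commutator (B : Type*) [Group B] (p : ℕ) (hp : 2 ≤ p)
    (r : ZMod p → B) (f g : B)
    (hlast : r 0 = ((List.range (p - 1)).map fun i => (r ((i + 1 : ℕ) : ZMod p))⁻¹).prod * ⁅f, g⁆) :
    ∃ a b : Wr B p, SemidirectProduct.inl (φ := cycShift B p) r = ⁅a, b⁆ := by
  have : Fact (1 < p) := ⟨hp⟩
  set P := invPrefixProd r (p - 1) with hP
  have hr0 : r 0 = P * ⁅f, g⁆ := hlast
  refine ⟨inl (Pi.mulSingle 0 (P * f * P⁻¹)) * inr (Multiplicative.ofAdd 1)⁻¹,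
    inl (prefixCochain r (P * g * P⁻¹)), ?_⟩
  rw [commutator_inl_mul_inr_inv_inl]
  congr 1
  funext i
  rcases eq_or_ne i 0 with rfl | hi
  · rw [hr0, zero_add, prefixCochain_one, prefixCochain_zero, ← hP, Pi.mulSingle_eq_same,
      commutatorElement_def]
    group
  · rw [Pi.mulSingle_eq_of_ne hi, one_mul, inv_one, mul_one, prefixCochain_add_one_mul_inv r _ hi]
end

section
/- For every k ≥ 1, the group G_k defined recursively by G_1 = {e} and G_k = {(g_1,g_2)π ∈ B_{k-1} ≀ C_2 : g_1 g_2 ∈ G_{k-1}} is isomorphic to a Sylow 2-subgroup of the alternating group A_{2^k}. -/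
/-- `BBgrp k` is the group `B_{k+1}`, the `(k+1)`-fold iterated wreath product of `C_2`:
`BBgrp 0 = C_2` and `BBgrp (k+1) = BBgrp k ≀ C_2`.  It is (isomorphic to) a Sylow
2-subgroup of `S_{2^(k+1)}`. -/
def BBgrp : ℕ → GrpCat
  | 0 => GrpCat.of (Multiplicative (ZMod 2))
  | k + 1 => GrpCat.of (Wr (BBgrp k) 2)

/-- `GGset k` is the subset `G_{k+1}` of `B_{k+1} = BBgrp k`: `GGset 0 = {1}` and
`GGset (k+1) = {(g₁,g₂)π : g₁ * g₂ ∈ GGset k}`. -/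
def GGset : (k : ℕ) → Set (BBgrp k)
  | 0 => {1}
  | k + 1 => {x : Wr (BBgrp k) 2 | x.left 0 * x.left 1 ∈ GGset k}

/-!
`B_k` acts faithfully on the `2^k` leaves of the binary tree, `(g₁, g₂)π` acting on the two
subtrees by `g₁, g₂` and swapping them by `π`. The swap consists of `2^(k-1)` disjoint
transpositions, an even number once `k ≥ 2`, so `(g₁, g₂)π` has the sign of `g₁ g₂`. By
induction `G_k` is therefore exactly the set of even permutations in `B_k`, a subgroup of
index `2`. Since `|B_k| = 2^(2^k - 1)` is the full `2`-part of `(2^k)!`, the order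
`2^(2^k - 2)` of `G_k` is the full `2`-part of `|A_{2^k}|`, so `G_k` embeds into `A_{2^k}`
as a Sylow subgroup.
-/

open Equiv

def Wr.equivRegularWreathProduct (B : Type*) [Group B] (p : ℕ) :
    Wr B p ≃* B ≀ᵣ Multiplicative (ZMod p) where
  toFun x := ⟨x.left ∘ Multiplicative.toAdd, x.right⟩
  invFun x := ⟨x.left ∘ Multiplicative.ofAdd, x.right⟩
  left_inv _ := rfl
  right_inv _ := rfl
  map_mul' x y := by
    ext q
    · simp [cycShift, MulEquiv.arrowCongr, add_comm]
    · rfl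

namespace RegularWreathProduct

variable {D Q : Type*} [Group D] [Group Q] (Λ : Type*) [MulAction D Λ]

theorem toPerm_eq_prodCongrLeft_mul_prodCongrRight (w : D ≀ᵣ Q) :
    toPerm D Q Λ w = prodCongrLeft (fun q => MulAction.toPerm (w.left q)) *
      prodCongrRight (fun _ => MulAction.toPerm w.right) := by
  ext ⟨l, q⟩ <;> rfl

theorem sign_toPerm [Fintype Λ] [DecidableEq Λ] [Fintype Q] [DecidableEq Q] (w : D ≀ᵣ Q) :
    Perm.sign (toPerm D Q Λ w) = (∏ q, Perm.sign (MulAction.toPerm (w.left q) : Perm Λ)) *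
      Perm.sign (MulAction.toPerm w.right : Perm Q) ^ Fintype.card Λ := by
  rw [toPerm_eq_prodCongrLeft_mul_prodCongrRight, Perm.sign_mul, Perm.sign_prodCongrLeft,
    Perm.sign_prodCongrRight, Finset.prod_const, Finset.card_univ]

end RegularWreathProduct

theorem Sylow.nonempty_mulEquiv_of_injective {G K : Type*} [Group G] [Finite G] [Group K]
    {p : ℕ} [Fact p.Prime] {f : K →* G} (hf : Function.Injective f)
    (hK : Nat.card K = p ^ (Nat.card G).factorization p) (P : Sylow p G) : Nonempty (K ≃* P) :=
  let Q := Sylow.ofCard f.range (by rw [← Nat.card_congr (MonoidHom.ofInjective hf).toEquiv, hK])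
  ⟨(MonoidHom.ofInjective hf).trans (Q.equiv P)⟩

theorem index_comap_alternatingGroup {G α : Type*} [Group G] [Fintype α] [DecidableEq α]
    (ψ : G →* Perm α) (h : ∃ g, ψ g ∉ alternatingGroup α) :
    ((alternatingGroup α).comap ψ).index = 2 := by
  obtain ⟨g, hg⟩ := h
  have hsurj : Function.Surjective (Perm.sign.comp ψ) := fun u => by
    rcases Int.units_eq_one_or u with rfl | rfl
    · exact ⟨1, map_one _⟩
    · exact ⟨g, (Int.units_eq_one_or _).resolve_left hg⟩
  rw [alternatingGroup, MonoidHom.comap_ker, Subgroup.index_ker, MonoidHom.range_eq_top.mpr hsurj,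
    Subgroup.card_top, Nat.card_eq_fintype_card, Fintype.card_units_int]

theorem Nat.factorization_factorial_two_pow (m : ℕ) :
    (2 ^ m).factorial.factorization 2 = 2 ^ m - 1 := by
  rw [← Nat.multiplicity_eq_factorization Nat.prime_two (Nat.factorial_ne_zero _),
    Nat.Prime.multiplicity_factorial_pow Nat.prime_two, Nat.geomSum_eq le_rfl, Nat.div_one]

theorem factorization_card_alternatingGroup_of_card_eq_two_pow {α : Type*} [Fintype α]
    [DecidableEq α] {m : ℕ} (hm : m ≠ 0) (hα : Nat.card α = 2 ^ m) :
    (Nat.card (alternatingGroup α)).factorization 2 = 2 ^ m - 2 := by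
  have : Nontrivial α := Finite.one_lt_card_iff_nontrivial.mp (hα ▸ Nat.one_lt_two_pow hm)
  have h := congrArg (·.factorization 2) (two_mul_nat_card_alternatingGroup (α := α))
  rw [Nat.card_perm, hα, Nat.factorization_factorial_two_pow,
    Nat.factorization_mul two_ne_zero Nat.card_pos.ne', Finsupp.add_apply,
    Nat.Prime.factorization_self Nat.prime_two] at h
  omega

namespace BBgrp

/-- `(l, q)` is the leaf `l` of the subtree `q`, as in the action of `D ≀ᵣ Q` on `Λ × Q`. -/
def Leaf : ℕ → Type
  | 0 => Multiplicative (ZMod 2)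
  | k + 1 => Leaf k × Multiplicative (ZMod 2)

instance Leaf.instFintype : ∀ k, Fintype (Leaf k)
  | 0 => inferInstanceAs (Fintype (Multiplicative (ZMod 2)))
  | k + 1 =>
    letI := Leaf.instFintype k
    inferInstanceAs (Fintype (Leaf k × Multiplicative (ZMod 2)))

instance Leaf.instDecidableEq : ∀ k, DecidableEq (Leaf k)
  | 0 => inferInstanceAs (DecidableEq (Multiplicative (ZMod 2)))
  | k + 1 =>
    letI := Leaf.instDecidableEq k
    inferInstanceAs (DecidableEq (Leaf k × Multiplicative (ZMod 2)))

theorem Leaf.card : ∀ k, Fintype.card (Leaf k) = 2 ^ (k + 1)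
  | 0 => rfl
  | k + 1 => by
    rw [show Fintype.card (Leaf (k + 1)) = Fintype.card (Leaf k) * 2 from
      Fintype.card_prod _ _, Leaf.card k, ← pow_succ]

instance Leaf.instNonempty (k : ℕ) : Nonempty (Leaf k) :=
  Fintype.card_pos_iff.mp (by rw [Leaf.card]; positivity)

def leafPerm : (k : ℕ) → BBgrp k →* Perm (Leaf k)
  | 0 => MulAction.toPermHom (Multiplicative (ZMod 2)) (Multiplicative (ZMod 2))
  | k + 1 =>
    letI := MulAction.compHom (Leaf k) (leafPerm k)
    (RegularWreathProduct.toPerm (BBgrp k) _ (Leaf k)).comp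
      (Wr.equivRegularWreathProduct (BBgrp k) 2).toMonoidHom

theorem leafPerm_injective : ∀ k, Function.Injective (leafPerm k)
  | 0 => MulAction.toPerm_injective (α := Multiplicative (ZMod 2))
  | k + 1 => by
    let _ := MulAction.compHom (Leaf k) (leafPerm k)
    have : FaithfulSMul (BBgrp k) (Leaf k) := ⟨fun h => leafPerm_injective k (Equiv.ext h)⟩
    exact (RegularWreathProduct.toPermInj (BBgrp k) _ (Leaf k)).comp
      (Wr.equivRegularWreathProduct (BBgrp k) 2).injective

theorem sign_leafPerm_succ (k : ℕ) (x : Wr (BBgrp k) 2) :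
    Perm.sign (leafPerm (k + 1) x) = Perm.sign (leafPerm k (x.left 0 * x.left 1)) := by
  let _ := MulAction.compHom (Leaf k) (leafPerm k)
  have hcard : Fintype.card (Leaf k) = 2 * 2 ^ k := by rw [Leaf.card, pow_succ']
  change Perm.sign (RegularWreathProduct.toPerm (BBgrp k) _ (Leaf k)
    (Wr.equivRegularWreathProduct _ 2 x)) = _
  rw [RegularWreathProduct.sign_toPerm, hcard, pow_mul, Int.units_sq, one_pow, mul_one]
  refine (Fin.prod_univ_two _).trans ?_
  rw [map_mul, map_mul]
  congr 3 <;> ext <;> rfl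

theorem sign_leafPerm_eq_one_iff :
    ∀ k (x : BBgrp k), Perm.sign (leafPerm k x) = 1 ↔ x ∈ GGset k
  | 0 => by
    change ∀ x : Multiplicative (ZMod 2),
      Perm.sign (MulAction.toPerm x : Perm (Multiplicative (ZMod 2))) = 1 ↔ x = 1
    decide
  | k + 1 => fun x => (sign_leafPerm_succ k x).symm ▸ sign_leafPerm_eq_one_iff k _

theorem exists_notMem_GGset : ∀ k, ∃ x : BBgrp k, x ∉ GGset k
  | 0 => ⟨Multiplicative.ofAdd (1 : ZMod 2), by
    change Multiplicative.ofAdd (1 : ZMod 2) ≠ 1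
    decide⟩
  | k + 1 => by
    obtain ⟨b, hb⟩ := exists_notMem_GGset k
    let f : ZMod 2 → BBgrp k := Pi.mulSingle 0 b
    refine ⟨(⟨f, 1⟩ : Wr (BBgrp k) 2), ?_⟩
    change f 0 * f 1 ∉ GGset k
    rwa [show f 0 = b from Pi.mulSingle_eq_same _ _,
      show f 1 = 1 from Pi.mulSingle_eq_of_ne (by decide) _, mul_one]

theorem card : ∀ k, Nat.card (BBgrp k) = 2 ^ (2 ^ (k + 1) - 1)
  | 0 => Nat.card_zmod 2
  | k + 1 => by
    have hexp : (2 ^ (k + 1) - 1) * 2 + 1 = 2 ^ (k + 2) - 1 := by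
      have := Nat.one_le_two_pow (n := k + 1)
      have : 2 ^ (k + 2) = 2 ^ (k + 1) * 2 := pow_succ 2 (k + 1)
      omega
    change Nat.card (Wr (BBgrp k) 2) = _
    rw [Nat.card_congr (Wr.equivRegularWreathProduct (BBgrp k) 2).toEquiv,
      RegularWreathProduct.card, card k, Nat.card_eq_fintype_card, Fintype.card_multiplicative,
      ZMod.card, ← pow_mul, ← pow_succ, hexp]

noncomputable def toPermFin (k : ℕ) : BBgrp k →* Perm (Fin (2 ^ (k + 1))) :=
  (Fintype.equivFinOfCardEq (Leaf.card k)).permCongrHom.toMonoidHom.comp (leafPerm k)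

theorem toPermFin_injective (k : ℕ) : Function.Injective (toPermFin k) := by
  rw [toPermFin, MonoidHom.coe_comp]
  exact (MulEquiv.injective _).comp (leafPerm_injective k)

theorem toPermFin_mem_alternatingGroup_iff (k : ℕ) (x : BBgrp k) :
    toPermFin k x ∈ alternatingGroup _ ↔ x ∈ GGset k := by
  rw [Perm.mem_alternatingGroup, ← sign_leafPerm_eq_one_iff]
  exact iff_of_eq (congrArg (· = 1) (Perm.sign_permCongr _ _))

theorem card_comap_toPermFin_alternatingGroup (k : ℕ) :
    Nat.card ((alternatingGroup _).comap (toPermFin k)) = 2 ^ (2 ^ (k + 1) - 2) := by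
  have hindex : ((alternatingGroup _).comap (toPermFin k)).index = 2 := by
    obtain ⟨x, hx⟩ := exists_notMem_GGset k
    exact index_comap_alternatingGroup _
      ⟨x, (toPermFin_mem_alternatingGroup_iff k x).not.mpr hx⟩
  have hcard := Subgroup.card_mul_index ((alternatingGroup _).comap (toPermFin k))
  have hexp : 2 ^ (k + 1) - 1 = 2 ^ (k + 1) - 2 + 1 := by
    have := Nat.one_lt_two_pow k.succ_ne_zero
    omega
  rw [hindex, card, hexp, pow_succ 2 (2 ^ (k + 1) - 2)] at hcard
  exact Nat.eq_of_mul_eq_mul_right two_pos hcard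

end BBgrp

/-- for every `k ≥ 1` the group `G_k` is isomorphic to a Sylow
2-subgroup of the alternating group `A_{2^k}` (indexing: `GGset k` is `G_{k+1}`,
a subset of `BBgrp k = B_{k+1}`, and it is compared with `Syl₂ A_{2^(k+1)}`). -/
theorem GG_iso_sylow_alternating (k : ℕ) (H : Subgroup (BBgrp k))
    (hH : (H : Set (BBgrp k)) = GGset k)
    (P : Sylow 2 (alternatingGroup (Fin (2 ^ (k + 1))))) :
    Nonempty (↥H ≃* ↥P) := by
  obtain rfl : H = (alternatingGroup _).comap (BBgrp.toPermFin k) :=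
    SetLike.ext' <| hH.trans <|
      Set.ext fun x => (BBgrp.toPermFin_mem_alternatingGroup_iff k x).symm
  refine Sylow.nonempty_mulEquiv_of_injective (f := (BBgrp.toPermFin k).subgroupComap _)
    (fun a b h => Subtype.ext (BBgrp.toPermFin_injective k (congrArg Subtype.val h))) ?_ P
  rw [BBgrp.card_comap_toPermFin_alternatingGroup,
    factorization_card_alternatingGroup_of_card_eq_two_pow k.succ_ne_zero (Nat.card_fin _)]
end
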